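/- In the tree reduced instance: if there exists A ⊆ {1, …, m} with |A| = ℓ and ⋃_{i ∈ A} S_i = {1, …, 3ℓ}, then for the deletion set W = {v^(i)_1 : i ∈ A}, candidate c uniquely wins the election restricted to W; indeed among the vertices of H_W, candidate c receives m + 2 − ℓ votes, candidate d receives m + 1 − ℓ votes, and each candidate e ∈ U receives exactly m + 1 − ℓ votes. -/

import Mathlib

/-- Vertices of the tree reduced instance: for each `i ∈ [m]`, the path `P^(i)` has
vertices `v i j` (`j : Fin 3`, the vertices `v^(i)_1, v^(i)_2, v^(i)_3`), `u i k`
(`k : Fin (3ℓ)`, the vertices `u^(i)_1, …, u^(i)_{3ℓ}`) and `w i`; the path `P^#` has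
vertices `zh 0, zh 1`; the path `P^*` has vertices `zs t` for `t : Fin (m + 1 - ℓ)`
(all 0-indexed). -/
inductive VT (ℓ m : ℕ) : Type
  | v (i : Fin m) (j : Fin 3) : VT ℓ m
  | u (i : Fin m) (k : Fin (3 * ℓ)) : VT ℓ m
  | w (i : Fin m) : VT ℓ m
  | zh (j : Fin 2) : VT ℓ m
  | zs (t : Fin (m + 1 - ℓ)) : VT ℓ m
  deriving DecidableEq

/-- The candidate set `C = U ∪ {c, d}`, where `U = {1, …, 3ℓ}`. -/
inductive CandT (ℓ : ℕ) : Type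
  | elem (k : Fin (3 * ℓ)) : CandT ℓ
  | c : CandT ℓ
  | d : CandT ℓ
  deriving DecidableEq

/-- Base edge relation of the tree reduced instance: consecutive vertices of each path
`P^(i) = (v^(i)_1, v^(i)_2, v^(i)_3, u^(i)_1, …, u^(i)_{3ℓ}, w^(i))`, of
`P^# = (z#_1, z#_2)` and of `P^* = (z*_1, …, z*_{m+1−ℓ})` are adjacent, and the last
vertex `z*_{m+1−ℓ}` of `P^*` is joined to each head `v^(i)_1` and to `z#_1`. -/
def baseRelT (ℓ m : ℕ) : VT ℓ m → VT ℓ m → Prop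
  | .v i j, .v i' j' => i = i' ∧ (j : ℕ) + 1 = (j' : ℕ)
  | .v i j, .u i' k => i = i' ∧ (j : ℕ) = 2 ∧ (k : ℕ) = 0
  | .u i k, .u i' k' => i = i' ∧ (k : ℕ) + 1 = (k' : ℕ)
  | .u i k, .w i' => i = i' ∧ (k : ℕ) + 1 = 3 * ℓ
  | .zh j, .zh j' => (j : ℕ) + 1 = (j' : ℕ)
  | .zs t, .zs t' => (t : ℕ) + 1 = (t' : ℕ)
  | .zs t, .v _ j => (t : ℕ) + 1 = m + 1 - ℓ ∧ (j : ℕ) = 0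
  | .zs t, .zh j => (t : ℕ) + 1 = m + 1 - ℓ ∧ (j : ℕ) = 0
  | _, _ => False

/-- The tree of the tree reduced instance. -/
def GT (ℓ m : ℕ) : SimpleGraph (VT ℓ m) := SimpleGraph.fromRel (baseRelT ℓ m)

/-- The voting function, given an enumeration `e i 0, e i 1, e i 2` of the elements of
each set `S_i`: `v^(i)_j` votes for `e^(i)_j`, `u^(i)_k` votes for `k`, the `w^(i)` and
`z#`'s vote for `c`, and the `z*`'s vote for `d`. -/
def τT (ℓ m : ℕ) (e : Fin m → Fin 3 → Fin (3 * ℓ)) : VT ℓ m → CandT ℓ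
  | .v i j => CandT.elem (e i j)
  | .u _ k => CandT.elem k
  | .w _ => CandT.c
  | .zh _ => CandT.c
  | .zs _ => CandT.d

/-- The set `S_i`, recovered from the enumeration of its elements. -/
def SetT (ℓ m : ℕ) (e : Fin m → Fin 3 → Fin (3 * ℓ)) (i : Fin m) :
    Finset (Fin (3 * ℓ)) :=
  Finset.image (e i) Finset.univ

/-- The distinguished vertex `x = z*_1`. -/
def xT (ℓ m : ℕ) (h : 0 < m + 1 - ℓ) : VT ℓ m := VT.zs ⟨0, h⟩

/-- `HW G W x`: the set of vertices reachable from `x` in the subgraph of `G` induced on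
the complement of `W` (each step of a connecting walk must avoid `W`). -/
def HW {V : Type*} (G : SimpleGraph V) (W : Set V) (x : V) : Set V :=
  {z | Relation.ReflTransGen (fun a b => G.Adj a b ∧ a ∉ W ∧ b ∉ W) x z}

/-- Candidate `c` uniquely wins the election restricted to `W`: every other candidate
gets strictly fewer votes among the voters of `H_W`. -/
def winsT (ℓ m : ℕ) (e : Fin m → Fin 3 → Fin (3 * ℓ)) (x : VT ℓ m)
    (W : Set (VT ℓ m)) : Prop :=
  ∀ y : CandT ℓ, y ≠ CandT.c →
    (HW (GT ℓ m) W x ∩ τT ℓ m e ⁻¹' {y}).ncard <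
      (HW (GT ℓ m) W x ∩ τT ℓ m e ⁻¹' {CandT.c}).ncard

section Aux
variable {ℓ m : ℕ}

def inHT (A : Finset (Fin m)) : VT ℓ m → Prop
  | .v i _ => i ∉ A
  | .u i _ => i ∉ A
  | .w i => i ∉ A
  | .zh _ => True
  | .zs _ => True

lemma closure_step (A : Finset (Fin m)) (a b : VT ℓ m)
    (ha : inHT A a) (hab : (GT ℓ m).Adj a b ∧ a ∉ {z | ∃ i ∈ A, z = VT.v i 0} ∧
      b ∉ {z | ∃ i ∈ A, z = VT.v i 0}) : inHT A b := by
  obtain ⟨hadj, -, hbW⟩ := hab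
  rw [GT, SimpleGraph.fromRel_adj] at hadj
  obtain ⟨-, hr⟩ := hadj
  cases a <;> cases b <;> simp_all [baseRelT, inHT] <;>
  first
    | (rcases hr with ⟨rfl, -⟩ | ⟨rfl, -⟩ <;> first | exact ha ‹_› | exact ha)
    | (intro hiA; exact hbW _ hiA rfl (Fin.ext hr.2))

end Aux
section Aux2
variable {ℓ m : ℕ}

def RT (A : Finset (Fin m)) (a b : VT ℓ m) : Prop :=
  (GT ℓ m).Adj a b ∧ a ∉ {z | ∃ i ∈ A, z = VT.v i 0} ∧
    b ∉ {z | ∃ i ∈ A, z = VT.v i 0}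

lemma uW (A : Finset (Fin m)) (i : Fin m) (k : Fin (3 * ℓ)) :
    VT.u i k ∉ {z : VT ℓ m | ∃ i' ∈ A, z = VT.v i' 0} := by
  rintro ⟨i', -, h⟩; cases h

lemma wW (A : Finset (Fin m)) (i : Fin m) :
    VT.w i ∉ {z : VT ℓ m | ∃ i' ∈ A, z = VT.v i' 0} := by
  rintro ⟨i', -, h⟩; cases h

lemma zhW (A : Finset (Fin m)) (j : Fin 2) :
    VT.zh j ∉ {z : VT ℓ m | ∃ i' ∈ A, z = VT.v i' 0} := by
  rintro ⟨i', -, h⟩; cases h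

lemma zsW (A : Finset (Fin m)) (t : Fin (m + 1 - ℓ)) :
    VT.zs t ∉ {z : VT ℓ m | ∃ i' ∈ A, z = VT.v i' 0} := by
  rintro ⟨i', -, h⟩; cases h

lemma vW (A : Finset (Fin m)) (i : Fin m) (j : Fin 3)
    (h : i ∉ A ∨ (j : ℕ) ≠ 0) :
    VT.v i j ∉ {z : VT ℓ m | ∃ i' ∈ A, z = VT.v i' 0} := by
  rintro ⟨i', hi', hv⟩
  rw [VT.v.injEq] at hv
  rcases h with h | h
  · exact h (hv.1 ▸ hi')
  · exact h (by simp [hv.2])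

lemma reach_zs (A : Finset (Fin m)) (h0 : 0 < m + 1 - ℓ) :
    ∀ n (h : n < m + 1 - ℓ),
      Relation.ReflTransGen (RT A) (xT ℓ m h0) (VT.zs ⟨n, h⟩) := by
  intro n
  induction n with
  | zero => intro h; exact Relation.ReflTransGen.refl
  | succ n ih =>
    intro h
    refine (ih (by omega)).tail ⟨?_, zsW A _, zsW A _⟩
    rw [GT, SimpleGraph.fromRel_adj]
    exact ⟨by simp [Fin.ext_iff], Or.inl (by simp [baseRelT])⟩

lemma reach_v0 (A : Finset (Fin m)) (hm : ℓ ≤ m) (h0 : 0 < m + 1 - ℓ)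
    (i : Fin m) (hi : i ∉ A) :
    Relation.ReflTransGen (RT A) (xT ℓ m h0) (VT.v i 0) := by
  refine (reach_zs A h0 (m - ℓ) (by omega)).tail ⟨?_, zsW A _, vW A i 0 (Or.inl hi)⟩
  rw [GT, SimpleGraph.fromRel_adj]
  exact ⟨by simp, Or.inl (by simp [baseRelT]; omega)⟩

lemma reach_v (A : Finset (Fin m)) (hm : ℓ ≤ m) (h0 : 0 < m + 1 - ℓ)
    (i : Fin m) (hi : i ∉ A) (j : Fin 3) :
    Relation.ReflTransGen (RT A) (xT ℓ m h0) (VT.v i j) := by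
  have step : ∀ (j1 j2 : Fin 3), (j1 : ℕ) + 1 = (j2 : ℕ) →
      RT A (VT.v (ℓ := ℓ) i j1) (VT.v i j2) := by
    intro j1 j2 h12
    refine ⟨?_, vW A i j1 (Or.inl hi), vW A i j2 (Or.inl hi)⟩
    rw [GT, SimpleGraph.fromRel_adj]
    refine ⟨?_, Or.inl (by simp [baseRelT, h12])⟩
    simp only [ne_eq, VT.v.injEq, not_and]
    intro _ hj; rw [Fin.ext_iff] at hj; omega
  have h0r := reach_v0 A hm h0 i hi
  have h1r := h0r.tail (step 0 1 rfl)
  have h2r := h1r.tail (step 1 2 rfl)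
  fin_cases j
  · exact h0r
  · exact h1r
  · exact h2r

lemma reach_u (A : Finset (Fin m)) (hm : ℓ ≤ m) (h0 : 0 < m + 1 - ℓ)
    (i : Fin m) (hi : i ∉ A) :
    ∀ n (h : n < 3 * ℓ),
      Relation.ReflTransGen (RT A) (xT ℓ m h0) (VT.u i ⟨n, h⟩) := by
  intro n
  induction n with
  | zero =>
    intro h
    refine (reach_v A hm h0 i hi 2).tail ⟨?_, vW A i 2 (Or.inl hi), uW A _ _⟩
    rw [GT, SimpleGraph.fromRel_adj]
    exact ⟨by simp, Or.inl (by simp [baseRelT])⟩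
  | succ n ih =>
    intro h
    refine (ih (by omega)).tail ⟨?_, uW A _ _, uW A _ _⟩
    rw [GT, SimpleGraph.fromRel_adj]
    exact ⟨by simp [VT.u.injEq, Fin.ext_iff], Or.inl (by simp [baseRelT])⟩

lemma reach_w (A : Finset (Fin m)) (hℓ : 1 ≤ ℓ) (hm : ℓ ≤ m) (h0 : 0 < m + 1 - ℓ)
    (i : Fin m) (hi : i ∉ A) :
    Relation.ReflTransGen (RT A) (xT ℓ m h0) (VT.w i) := by
  refine (reach_u A hm h0 i hi (3 * ℓ - 1) (by omega)).tail ⟨?_, uW A _ _, wW A _⟩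
  rw [GT, SimpleGraph.fromRel_adj]
  exact ⟨by simp, Or.inl (by simp [baseRelT]; omega)⟩

lemma reach_zh (A : Finset (Fin m)) (hm : ℓ ≤ m) (h0 : 0 < m + 1 - ℓ)
    (j : Fin 2) :
    Relation.ReflTransGen (RT A) (xT ℓ m h0) (VT.zh j) := by
  have h0r : Relation.ReflTransGen (RT A) (xT ℓ m h0) (VT.zh 0) := by
    refine (reach_zs A h0 (m - ℓ) (by omega)).tail ⟨?_, zsW A _, zhW A _⟩
    rw [GT, SimpleGraph.fromRel_adj]
    exact ⟨by simp, Or.inl (by simp [baseRelT]; omega)⟩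
  have h1r : Relation.ReflTransGen (RT A) (xT ℓ m h0) (VT.zh 1) := by
    refine h0r.tail ⟨?_, zhW A _, zhW A _⟩
    rw [GT, SimpleGraph.fromRel_adj]
    exact ⟨by simp [Fin.ext_iff], Or.inl (by simp [baseRelT])⟩
  fin_cases j
  · exact h0r
  · exact h1r

lemma HW_eq (A : Finset (Fin m)) (hℓ : 1 ≤ ℓ) (hm : ℓ ≤ m) (h0 : 0 < m + 1 - ℓ) :
    HW (GT ℓ m) {z | ∃ i ∈ A, z = VT.v i 0} (xT ℓ m h0) = {z | inHT A z} := by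
  ext z
  constructor
  · intro hz
    induction hz with
    | refl => trivial
    | tail _ hstep ih => exact closure_step A _ _ ih hstep
  · intro hz
    cases z with
    | v i j => exact reach_v A hm h0 i hz j
    | u i k => obtain ⟨n, h⟩ := k; exact reach_u A hm h0 i hz n h
    | w i => exact reach_w A hℓ hm h0 i hz
    | zh j => exact reach_zh A hm h0 j
    | zs t => obtain ⟨n, h⟩ := t; exact reach_zs A h0 n h

end Aux2
section Aux3
variable {ℓ m : ℕ}

lemma card_SetT (e : Fin m → Fin 3 → Fin (3 * ℓ)) (hinj : ∀ i, Function.Injective (e i))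
    (i : Fin m) : (SetT ℓ m e i).card = 3 := by
  rw [SetT, Finset.card_image_of_injective _ (hinj i)]
  simp

lemma one_in_A (e : Fin m → Fin 3 → Fin (3 * ℓ)) (hinj : ∀ i, Function.Injective (e i))
    (A : Finset (Fin m)) (hA : A.card = ℓ)
    (hAcov : A.biUnion (SetT ℓ m e) = Finset.univ) (k : Fin (3 * ℓ)) :
    (A.filter fun i => k ∈ SetT ℓ m e i).card = 1 := by
  have hsum : ∑ k : Fin (3 * ℓ), (A.filter fun i => k ∈ SetT ℓ m e i).card = 3 * ℓ := by
    have : ∀ k : Fin (3 * ℓ), (A.filter fun i => k ∈ SetT ℓ m e i).card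
        = ∑ i ∈ A, if k ∈ SetT ℓ m e i then 1 else 0 := by
      intro k; rw [Finset.card_filter]
    simp_rw [this]
    rw [Finset.sum_comm]
    have : ∀ i ∈ A, ∑ k : Fin (3 * ℓ), (if k ∈ SetT ℓ m e i then 1 else 0) = 3 := by
      intro i _
      rw [Finset.sum_ite_mem, Finset.univ_inter, Finset.sum_const, smul_eq_mul, mul_one,
        card_SetT e hinj]
    rw [Finset.sum_congr rfl this, Finset.sum_const, smul_eq_mul, hA]
    ring
  have hge : ∀ k : Fin (3 * ℓ), 1 ≤ (A.filter fun i => k ∈ SetT ℓ m e i).card := by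
    intro k
    rw [Nat.one_le_iff_ne_zero, ne_eq, Finset.card_eq_zero, ← ne_eq,
      ← Finset.nonempty_iff_ne_empty]
    have : k ∈ A.biUnion (SetT ℓ m e) := by rw [hAcov]; exact Finset.mem_univ k
    obtain ⟨i, hi, hki⟩ := Finset.mem_biUnion.mp this
    exact ⟨i, Finset.mem_filter.mpr ⟨hi, hki⟩⟩
  have h1 : (∑ k : Fin (3 * ℓ), 1) = ∑ k : Fin (3 * ℓ), (A.filter fun i => k ∈ SetT ℓ m e i).card := by
    rw [hsum]; simp
  have := (Finset.sum_eq_sum_iff_of_le (fun k _ => hge k)).mp h1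
  exact (this k (Finset.mem_univ k)).symm

lemma unique_pair (e : Fin m → Fin 3 → Fin (3 * ℓ)) (hinj : ∀ i, Function.Injective (e i))
    (htwo : ∀ k : Fin (3 * ℓ),
      (Finset.univ.filter fun i => k ∈ SetT ℓ m e i).card = 2)
    (A : Finset (Fin m)) (hA : A.card = ℓ)
    (hAcov : A.biUnion (SetT ℓ m e) = Finset.univ) (k : Fin (3 * ℓ)) :
    ((Aᶜ ×ˢ (Finset.univ : Finset (Fin 3))).filter fun p => e p.1 p.2 = k).card = 1 := by
  classical
  have hsplit : (A.filter fun i => k ∈ SetT ℓ m e i).card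
      + (Aᶜ.filter fun i => k ∈ SetT ℓ m e i).card = 2 := by
    rw [← htwo k]
    rw [← Finset.filter_union_filter_not_eq (· ∈ A) (Finset.univ.filter fun i => k ∈ SetT ℓ m e i)]
    rw [Finset.card_union_of_disjoint]
    · congr 1
      · congr 1; ext i; simp [and_comm]
      · congr 1; ext i; simp [and_comm]
    · exact Finset.disjoint_filter_filter_not _ _ _
  have hcompl : (Aᶜ.filter fun i => k ∈ SetT ℓ m e i).card = 1 := by
    have := one_in_A e hinj A hA hAcov k
    omega
  obtain ⟨i0, hi0⟩ := Finset.card_eq_one.mp hcompl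
  have hi0mem : i0 ∈ Aᶜ ∧ k ∈ SetT ℓ m e i0 := by
    have : i0 ∈ Aᶜ.filter fun i => k ∈ SetT ℓ m e i := by rw [hi0]; simp
    exact Finset.mem_filter.mp this
  obtain ⟨j0, -, hj0⟩ := Finset.mem_image.mp hi0mem.2
  rw [Finset.card_eq_one]
  refine ⟨(i0, j0), ?_⟩
  ext ⟨i, j⟩
  simp only [Finset.mem_filter, Finset.mem_product, Finset.mem_univ, and_true,
    Finset.mem_singleton, Prod.mk.injEq]
  constructor
  · rintro ⟨hiA, hij⟩
    have hik : i ∈ Aᶜ.filter fun i' => k ∈ SetT ℓ m e i' :=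
      Finset.mem_filter.mpr ⟨hiA, Finset.mem_image.mpr ⟨j, Finset.mem_univ j, hij⟩⟩
    rw [hi0] at hik
    have hii0 : i = i0 := Finset.mem_singleton.mp hik
    subst hii0
    exact ⟨rfl, hinj i (hij.trans hj0.symm)⟩
  · rintro ⟨rfl, rfl⟩
    exact ⟨hi0mem.1, hj0⟩

end Aux3
section Aux4
variable {ℓ m : ℕ}

lemma w_inj : Function.Injective (VT.w (ℓ := ℓ) (m := m)) := by
  intro a b h; injection h

lemma zh_inj : Function.Injective (VT.zh (ℓ := ℓ) (m := m)) := by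
  intro a b h; injection h

lemma zs_inj : Function.Injective (VT.zs (ℓ := ℓ) (m := m)) := by
  intro a b h; injection h

lemma count_c (e : Fin m → Fin 3 → Fin (3 * ℓ)) (A : Finset (Fin m))
    (hA : A.card = ℓ) (hm : ℓ ≤ m) :
    ({z | inHT A z} ∩ τT ℓ m e ⁻¹' {CandT.c}).ncard = m + 2 - ℓ := by
  classical
  have hset : {z | inHT A z} ∩ τT ℓ m e ⁻¹' {CandT.c}
      = ↑(Aᶜ.image (VT.w (ℓ := ℓ)) ∪ Finset.univ.image (VT.zh (ℓ := ℓ) (m := m))) := by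
    ext z
    cases z <;> simp [inHT, τT]
  rw [hset, Set.ncard_coe_finset, Finset.card_union_of_disjoint, Finset.card_image_of_injective _ w_inj,
    Finset.card_image_of_injective _ zh_inj, Finset.card_compl, hA]
  · simp; omega
  · simp [Finset.disjoint_left]

lemma count_d (e : Fin m → Fin 3 → Fin (3 * ℓ)) (A : Finset (Fin m)) :
    ({z | inHT A z} ∩ τT ℓ m e ⁻¹' {CandT.d}).ncard = m + 1 - ℓ := by
  classical
  have hset : {z | inHT A z} ∩ τT ℓ m e ⁻¹' {CandT.d}
      = ↑(Finset.univ.image (VT.zs (ℓ := ℓ) (m := m))) := by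
    ext z
    cases z <;> simp [inHT, τT]
  rw [hset, Set.ncard_coe_finset, Finset.card_image_of_injective _ zs_inj]
  simp

lemma count_elem (e : Fin m → Fin 3 → Fin (3 * ℓ)) (hinj : ∀ i, Function.Injective (e i))
    (htwo : ∀ k : Fin (3 * ℓ),
      (Finset.univ.filter fun i => k ∈ SetT ℓ m e i).card = 2)
    (A : Finset (Fin m)) (hA : A.card = ℓ)
    (hAcov : A.biUnion (SetT ℓ m e) = Finset.univ) (hm : ℓ ≤ m) (k : Fin (3 * ℓ)) :
    ({z | inHT A z} ∩ τT ℓ m e ⁻¹' {CandT.elem k}).ncard = m + 1 - ℓ := by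
  classical
  have hset : {z | inHT A z} ∩ τT ℓ m e ⁻¹' {CandT.elem k}
      = ↑(Aᶜ.image (fun i => VT.u (ℓ := ℓ) i k)
          ∪ ((Aᶜ ×ˢ Finset.univ).filter fun p => e p.1 p.2 = k).image
              (fun p => VT.v (ℓ := ℓ) p.1 p.2)) := by
    ext z
    cases z <;> simp [inHT, τT, eq_comm, and_comm] <;> aesop
  rw [hset, Set.ncard_coe_finset, Finset.card_union_of_disjoint]
  · rw [Finset.card_image_of_injective _ (fun a b h => by injection h),
      Finset.card_compl, hA]
    rw [Finset.card_image_of_injOn (fun p _ q _ h => by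
      obtain ⟨p1, p2⟩ := p; obtain ⟨q1, q2⟩ := q
      simp only [VT.v.injEq] at h
      exact Prod.ext h.1 h.2)]
    rw [unique_pair e hinj htwo A hA hAcov k]
    simp; omega
  · simp only [Finset.disjoint_left, Finset.mem_image, Finset.mem_filter]
    rintro z ⟨i, -, rfl⟩ ⟨p, -, h⟩
    cases h

end Aux4
/-- If `A` is an exact cover (`|A| = ℓ`, `⋃_{i ∈ A} S_i = {1, …, 3ℓ}`), then deleting the
heads `v^(i)_1` for `i ∈ A` makes candidate `c` uniquely win; indeed `c` gets
`m + 2 − ℓ` votes, `d` gets `m + 1 − ℓ` votes, and each `e ∈ U` gets `m + 1 − ℓ`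
votes. -/
theorem tree_exact_cover_implies_wins (ℓ m : ℕ) (hℓ : 1 ≤ ℓ) (hm : ℓ ≤ m)
    (e : Fin m → Fin 3 → Fin (3 * ℓ))
    (hinj : ∀ i, Function.Injective (e i))
    (hcov : Finset.univ.biUnion (SetT ℓ m e) = Finset.univ)
    (htwo : ∀ k : Fin (3 * ℓ),
      (Finset.univ.filter fun i => k ∈ SetT ℓ m e i).card = 2)
    (A : Finset (Fin m)) (hA : A.card = ℓ)
    (hAcov : A.biUnion (SetT ℓ m e) = Finset.univ) :
    winsT ℓ m e (xT ℓ m (by omega)) {z | ∃ i ∈ A, z = VT.v i 0} ∧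
    (HW (GT ℓ m) {z | ∃ i ∈ A, z = VT.v i 0} (xT ℓ m (by omega)) ∩
        τT ℓ m e ⁻¹' {CandT.c}).ncard = m + 2 - ℓ ∧
    (HW (GT ℓ m) {z | ∃ i ∈ A, z = VT.v i 0} (xT ℓ m (by omega)) ∩
        τT ℓ m e ⁻¹' {CandT.d}).ncard = m + 1 - ℓ ∧
    ∀ k : Fin (3 * ℓ),
      (HW (GT ℓ m) {z | ∃ i ∈ A, z = VT.v i 0} (xT ℓ m (by omega)) ∩
          τT ℓ m e ⁻¹' {CandT.elem k}).ncard = m + 1 - ℓ := by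
  have h0 : 0 < m + 1 - ℓ := by omega
  have hHW := HW_eq A hℓ hm h0
  have hc : (HW (GT ℓ m) {z | ∃ i ∈ A, z = VT.v i 0} (xT ℓ m h0) ∩
      τT ℓ m e ⁻¹' {CandT.c}).ncard = m + 2 - ℓ := by
    rw [hHW]; exact count_c e A hA hm
  have hd : (HW (GT ℓ m) {z | ∃ i ∈ A, z = VT.v i 0} (xT ℓ m h0) ∩
      τT ℓ m e ⁻¹' {CandT.d}).ncard = m + 1 - ℓ := by
    rw [hHW]; exact count_d e A
  have he : ∀ k, (HW (GT ℓ m) {z | ∃ i ∈ A, z = VT.v i 0} (xT ℓ m h0) ∩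
      τT ℓ m e ⁻¹' {CandT.elem k}).ncard = m + 1 - ℓ := by
    intro k; rw [hHW]; exact count_elem e hinj htwo A hA hAcov hm k
  refine ⟨?_, hc, hd, he⟩
  intro y hy
  rw [hc]
  cases y with
  | elem k => rw [he k]; omega
  | c => exact absurd rfl hy
  | d => rw [hd]; omega
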